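/- arXiv:0807.3127 — 3 statements merged into one kernel-verified Lean document; each statement's English description precedes it below -/
import Mathlib

section
/- Under the same hypotheses (Poisson algebra with second-class constraints C_m whose bracket matrix {C_m,C_n} has an inverse N_{mn} modulo the constraint ideal I), the Dirac bracket satisfies the Jacobi identity weakly: {{F,G}^D, K}^D + {{G,K}^D, F}^D + {{K,F}^D, G}^D ∈ I. -/
/-- The Dirac bracket associated to a bracket `br`, constraints `C` and matrix `N`. -/
def diracBracket {R : Type*} [CommRing R] {k : ℕ} (br : R → R → R)
    (C : Fin k → R) (N : Fin k → Fin k → R) (F G : R) : R :=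
  br F G - ∑ m, ∑ n, br F (C m) * N m n * br (C n) G

/-!
Write `I` for the ideal of the constraints and `X* := X - ∑ {X, C m} N m n C n`. Then `X* ≡ X`
mod `I`, and `X*` is first class: `{C j, X*} ∈ I` because `N` inverts `({C n, C j})` mod `I`.
By the Leibniz rule `{I, X*} ⊆ I`, and the antisymmetry of `N` gives `{A, K}^D ≡ {A, K*}`.
Hence `{{F, G}^D, K}^D ≡ {{F*, G*}, K*}` mod `I`, and the cyclic sum of the right-hand sides
vanishes by the Jacobi identity of `{·,·}`.
-/

section Bracket

variable {R : Type*} [CommRing R] (br : R → R → R)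

theorem br_sub_right (hadd : ∀ a b c : R, br a (b + c) = br a b + br a c) (a x y : R) :
    br a (x - y) = br a x - br a y :=
  map_sub (AddMonoidHom.mk' (br a) (hadd a)) x y

theorem br_sum_right (hadd : ∀ a b c : R, br a (b + c) = br a b + br a c) (a : R)
    {ι : Type*} (s : Finset ι) (f : ι → R) :
    br a (∑ i ∈ s, f i) = ∑ i ∈ s, br a (f i) :=
  map_sum (AddMonoidHom.mk' (br a) (hadd a)) f s

theorem br_add_left (hadd : ∀ a b c : R, br a (b + c) = br a b + br a c)
    (hanti : ∀ a b : R, br a b = -br b a) (a b c : R) :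
    br (a + b) c = br a c + br b c := by
  rw [hanti, hadd, hanti c a, hanti c b, neg_add, neg_neg, neg_neg]

theorem br_sub_left (hadd : ∀ a b c : R, br a (b + c) = br a b + br a c)
    (hanti : ∀ a b : R, br a b = -br b a) (a x y : R) :
    br (x - y) a = br x a - br y a :=
  map_sub (AddMonoidHom.mk' (br · a) (br_add_left br hadd hanti · · a)) x y

theorem br_mul_left (hanti : ∀ a b : R, br a b = -br b a)
    (hleib : ∀ a b c : R, br a (b * c) = br a b * c + b * br a c) (a b c : R) :
    br (a * b) c = br a c * b + a * br b c := by
  rw [hanti, hleib, hanti c a, hanti c b]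
  ring

theorem br_br_cyclic_eq_zero (hanti : ∀ a b : R, br a b = -br b a)
    (hjac : ∀ a b c : R, br a (br b c) + br b (br c a) + br c (br a b) = 0) (a b c : R) :
    br (br a b) c + br (br b c) a + br (br c a) b = 0 := by
  linear_combination hanti (br a b) c + hanti (br b c) a + hanti (br c a) b - hjac c a b

theorem br_mem_span_of_forall_mem (hadd : ∀ a b c : R, br a (b + c) = br a b + br a c)
    (hanti : ∀ a b : R, br a b = -br b a)
    (hleib : ∀ a b c : R, br a (b * c) = br a b * c + b * br a c)
    {s : Set R} {Y : R} (hY : ∀ c ∈ s, br c Y ∈ Ideal.span s) {X : R}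
    (hX : X ∈ Ideal.span s) : br X Y ∈ Ideal.span s := by
  induction hX using Submodule.span_induction with
  | mem c hc => exact hY c hc
  | zero =>
    rw [show br 0 Y = 0 by simpa using br_add_left br hadd hanti 0 0 Y]
    exact zero_mem _
  | add x y _ _ hx hy => exact br_add_left br hadd hanti x y Y ▸ add_mem hx hy
  | smul a x hx hxY =>
    rw [smul_eq_mul, br_mul_left br hanti hleib]
    exact add_mem (Ideal.mul_mem_left _ _ hx) (Ideal.mul_mem_left _ _ hxY)

end Bracket

theorem Ideal.sum_sum_mul_mem_span_range {R : Type*} [CommRing R] {ι κ : Type*} (C : κ → R)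
    (s : Finset ι) (t : Finset κ) (f : ι → κ → R) :
    ∑ m ∈ s, ∑ n ∈ t, f m n * C n ∈ Ideal.span (Set.range C) :=
  Ideal.sum_mem _ fun _ _ ↦ Ideal.sum_mem _ fun n _ ↦
    Ideal.mul_mem_left _ _ (Ideal.subset_span ⟨n, rfl⟩)

section Dirac

variable {R : Type*} [CommRing R] {k : ℕ} (br : R → R → R) (C : Fin k → R)
  (N : Fin k → Fin k → R)

def diracStar (X : R) : R :=
  X - ∑ m, ∑ n, br X (C m) * N m n * C n

theorem diracStar_smodEq (X : R) : diracStar br C N X ≡ X [SMOD Ideal.span (Set.range C)] := by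
  rw [SModEq.sub_mem, diracStar, sub_sub_cancel_left, neg_mem_iff]
  exact Ideal.sum_sum_mul_mem_span_range C _ _ _


theorem br_constraint_diracStar_mem (hadd : ∀ a b c : R, br a (b + c) = br a b + br a c)
    (hanti : ∀ a b : R, br a b = -br b a)
    (hleib : ∀ a b c : R, br a (b * c) = br a b * c + b * br a c)
    (hN : ∀ m j, (∑ n, N m n * br (C n) (C j)) - (if m = j then 1 else 0)
      ∈ Ideal.span (Set.range C))
    (j : Fin k) (K : R) :
    br (C j) (diracStar br C N K) ∈ Ideal.span (Set.range C) := by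
  have hterm : ∀ m n, br (C j) (br K (C m) * N m n * C n) =
      (br (C j) (br K (C m)) * N m n + br K (C m) * br (C j) (N m n)) * C n
        - br K (C m) * (N m n * br (C n) (C j)) := by
    intro m n
    rw [hleib, hleib, hanti (C j) (C n)]
    ring
  have hexpand : br (C j) (diracStar br C N K) =
      br (C j) K + ∑ m, br K (C m) * ∑ n, N m n * br (C n) (C j)
        - ∑ m, ∑ n, (br (C j) (br K (C m)) * N m n + br K (C m) * br (C j) (N m n)) * C n := by
    simp only [diracStar, br_sub_right br hadd, br_sum_right br hadd, hterm,
      Finset.sum_sub_distrib, Finset.mul_sum]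
    ring
  have hinv : ∑ m, br K (C m) * ∑ n, N m n * br (C n) (C j) ≡ br K (C j)
      [SMOD Ideal.span (Set.range C)] :=
    calc _ ≡ ∑ m, br K (C m) * (if m = j then 1 else 0) [SMOD Ideal.span (Set.range C)] :=
          SModEq.sum fun m _ ↦ SModEq.rfl.mul (SModEq.sub_mem.2 (hN m j))
      _ = br K (C j) := by simp
  rw [← SModEq.zero, hexpand]
  calc _ ≡ br (C j) K + br K (C j) - 0 [SMOD Ideal.span (Set.range C)] :=
        (SModEq.rfl.add hinv).sub (SModEq.zero.2 (Ideal.sum_sum_mul_mem_span_range C _ _ _))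
    _ = 0 := by rw [hanti (C j) K]; ring

theorem br_diracStar_smodEq_of_smodEq (hadd : ∀ a b c : R, br a (b + c) = br a b + br a c)
    (hanti : ∀ a b : R, br a b = -br b a)
    (hleib : ∀ a b c : R, br a (b * c) = br a b * c + b * br a c)
    (hN : ∀ m j, (∑ n, N m n * br (C n) (C j)) - (if m = j then 1 else 0)
      ∈ Ideal.span (Set.range C))
    (K : R) {X X' : R} (hX : X ≡ X' [SMOD Ideal.span (Set.range C)]) :
    br X (diracStar br C N K) ≡ br X' (diracStar br C N K) [SMOD Ideal.span (Set.range C)] := by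
  rw [SModEq.sub_mem, ← br_sub_left br hadd hanti]
  refine br_mem_span_of_forall_mem br hadd hanti hleib ?_ (SModEq.sub_mem.1 hX)
  rintro _ ⟨j, rfl⟩
  exact br_constraint_diracStar_mem br C N hadd hanti hleib hN j K

theorem diracBracket_smodEq_br_diracStar (hadd : ∀ a b c : R, br a (b + c) = br a b + br a c)
    (hanti : ∀ a b : R, br a b = -br b a)
    (hleib : ∀ a b c : R, br a (b * c) = br a b * c + b * br a c)
    (hNanti : ∀ m n, N m n = -N n m) (A K : R) :
    diracBracket br C N A K ≡ br A (diracStar br C N K) [SMOD Ideal.span (Set.range C)] := by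
  have hterm : ∀ m n, br A (br K (C m) * N m n * C n) =
      (br A (br K (C m)) * N m n + br K (C m) * br A (N m n)) * C n
        + br K (C m) * N m n * br A (C n) := by
    intro m n
    rw [hleib, hleib]
  have hswap : ∑ m, ∑ n, br A (C m) * N m n * br (C n) K
      = ∑ m, ∑ n, br K (C m) * N m n * br A (C n) := by
    rw [Finset.sum_comm]
    refine Finset.sum_congr rfl fun m _ ↦ Finset.sum_congr rfl fun n _ ↦ ?_
    rw [hanti (C m) K, hNanti n m]
    ring
  have hmem := Ideal.sum_sum_mul_mem_span_range C Finset.univ Finset.univ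
    fun m n ↦ br A (br K (C m)) * N m n + br K (C m) * br A (N m n)
  rw [SModEq.sub_mem]
  convert hmem using 1
  simp only [diracBracket, diracStar, br_sub_right br hadd, br_sum_right br hadd, hterm,
    Finset.sum_add_distrib, hswap]
  ring

theorem diracBracket_diracBracket_smodEq (hadd : ∀ a b c : R, br a (b + c) = br a b + br a c)
    (hanti : ∀ a b : R, br a b = -br b a)
    (hleib : ∀ a b c : R, br a (b * c) = br a b * c + b * br a c)
    (hNanti : ∀ m n, N m n = -N n m)
    (hN : ∀ m j, (∑ n, N m n * br (C n) (C j)) - (if m = j then 1 else 0)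
      ∈ Ideal.span (Set.range C))
    (A B D : R) :
    diracBracket br C N (diracBracket br C N A B) D
      ≡ br (br (diracStar br C N A) (diracStar br C N B)) (diracStar br C N D)
      [SMOD Ideal.span (Set.range C)] :=
  calc _ ≡ br (diracBracket br C N A B) (diracStar br C N D) [SMOD Ideal.span (Set.range C)] :=
        diracBracket_smodEq_br_diracStar br C N hadd hanti hleib hNanti _ D
    _ ≡ br (br A (diracStar br C N B)) (diracStar br C N D) [SMOD Ideal.span (Set.range C)] :=
        br_diracStar_smodEq_of_smodEq br C N hadd hanti hleib hN D
          (diracBracket_smodEq_br_diracStar br C N hadd hanti hleib hNanti A B)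
    _ ≡ _ [SMOD Ideal.span (Set.range C)] :=
        br_diracStar_smodEq_of_smodEq br C N hadd hanti hleib hN D
          (br_diracStar_smodEq_of_smodEq br C N hadd hanti hleib hN B
            (diracStar_smodEq br C N A).symm)

end Dirac

theorem diracBracket_jacobi_weak_general
    (R : Type*) [CommRing R] (br : R → R → R)
    (hadd₂ : ∀ a b c : R, br a (b + c) = br a b + br a c)
    (hanti : ∀ a b : R, br a b = -br b a)
    (hjac : ∀ a b c : R, br a (br b c) + br b (br c a) + br c (br a b) = 0)
    (hleib : ∀ a b c : R, br a (b * c) = br a b * c + b * br a c)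
    (k : ℕ) (C : Fin k → R) (N : Fin k → Fin k → R)
    (hNanti : ∀ m n, N m n = -N n m)
    (hN : ∀ m j, (∑ n, N m n * br (C n) (C j)) - (if m = j then 1 else 0)
            ∈ Ideal.span (Set.range C)) :
    ∀ F G K : R,
      diracBracket br C N (diracBracket br C N F G) K
        + diracBracket br C N (diracBracket br C N G K) F
        + diracBracket br C N (diracBracket br C N K F) G
        ∈ Ideal.span (Set.range C) := by
  intro F G K
  have hcyc := diracBracket_diracBracket_smodEq br C N hadd₂ hanti hleib hNanti hN
  rw [← SModEq.zero]
  calc _ ≡ _ [SMOD Ideal.span (Set.range C)] := ((hcyc F G K).add (hcyc G K F)).add (hcyc K F G)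
    _ = 0 := br_br_cyclic_eq_zero br hanti hjac _ _ _

/-- the Dirac bracket satisfies the Jacobi identity weakly, i.e. modulo the
ideal generated by the constraints, provided `N` is an antisymmetric inverse (modulo the
constraint ideal) of the constraint-bracket matrix. -/
theorem diracBracket_jacobi_weak
    (R : Type*) [CommRing R] (br : R → R → R)
    (hadd₁ : ∀ a b c : R, br (a + b) c = br a c + br b c)
    (hadd₂ : ∀ a b c : R, br a (b + c) = br a b + br a c)
    (hanti : ∀ a b : R, br a b = -br b a)
    (hjac : ∀ a b c : R, br a (br b c) + br b (br c a) + br c (br a b) = 0)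
    (hleib : ∀ a b c : R, br a (b * c) = br a b * c + b * br a c)
    (k : ℕ) (C : Fin k → R) (N : Fin k → Fin k → R)
    (hNanti : ∀ m n, N m n = -N n m)
    (hN : ∀ m j, (∑ n, N m n * br (C n) (C j)) - (if m = j then 1 else 0)
            ∈ Ideal.span (Set.range C)) :
    ∀ F G K : R,
      diracBracket br C N (diracBracket br C N F G) K
        + diracBracket br C N (diracBracket br C N G K) F
        + diracBracket br C N (diracBracket br C N K F) G
        ∈ Ideal.span (Set.range C) :=
  diracBracket_jacobi_weak_general R br hadd₂ hanti hjac hleib k C N hNanti hN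
end

section
/- In a Poisson algebra with constraints C_m and 'inverse matrix' N_{mn} (Σ_n N_{mn}{C_n,C_j} = δ_{mj} exactly), define F' := F − Σ_{m,n}{F,C_m} N_{mn} C_n. Then {F', C_k} ∈ I, the ideal generated by the C_m, provided {N_{mn}, C_k} ∈ I and {{F,C_m}, C_k} multiplied by C_n lies in I (which holds automatically since C_n ∈ I). -/
/-!
Bracketing with a fixed constraint `C j` is a derivation `D`, so
`D (∑ₙ aₙ Cₙ) ≡ ∑ₙ aₙ D(Cₙ)` modulo the constraint ideal. Writing `F' = F - ∑ₙ aₙ Cₙ` with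
`aₙ = ∑ₘ {F, Cₘ} Nₘₙ`, the inverse-matrix identity turns `∑ₙ aₙ {Cₙ, Cⱼ}` into `{F, Cⱼ}`, which
cancels `D F`.
-/

open Finset

theorem Derivation.map_sum_mul_sub_sum_mul_mem_span {S A ι : Type*} [CommRing S] [CommRing A]
    [Algebra S A] (D : Derivation S A A) (s : Finset ι) (a c : ι → A) :
    D (∑ i ∈ s, a i * c i) - ∑ i ∈ s, a i * D (c i) ∈ Ideal.span (Set.range c) := by
  simp only [map_sum, Derivation.leibniz, smul_eq_mul, sum_add_distrib, add_sub_cancel_left]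
  exact Ideal.sum_mem _ fun i _ => Ideal.mul_mem_right _ _ (Ideal.subset_span ⟨i, rfl⟩)

theorem sum_sum_mul_mul_eq_of_mul_eq_one {R ι : Type*} [CommRing R] [Fintype ι] [DecidableEq ι]
    (N M : ι → ι → R) (h : ∀ m j, ∑ n, N m n * M n j = if m = j then 1 else 0)
    (x : ι → R) (j : ι) :
    ∑ n, (∑ m, x m * N m n) * M n j = x j := by
  calc ∑ n, (∑ m, x m * N m n) * M n j = ∑ m, x m * ∑ n, N m n * M n j := by
        simp only [sum_mul, mul_sum, mul_assoc]
        exact sum_comm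
    _ = x j := by simp [h]

def bracketDerivation {R : Type*} [CommRing R] (br : R → R → R)
    (hadd₁ : ∀ a b c : R, br (a + b) c = br a c + br b c)
    (hanti : ∀ a b : R, br a b = -br b a)
    (hleib : ∀ a b c : R, br a (b * c) = br a b * c + b * br a c) (c : R) :
    Derivation ℤ R R :=
  Derivation.mk' (AddMonoidHom.mk' (br · c) (hadd₁ · · c)).toIntLinearMap fun a b => by
    simp only [AddMonoidHom.coe_toIntLinearMap, AddMonoidHom.mk'_apply, smul_eq_mul]
    rw [hanti, hleib, hanti c a, hanti c b]
    ring

theorem modified_element_bracket_constraint_mem_ideal_general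
    (R : Type*) [CommRing R] (br : R → R → R)
    (hadd₁ : ∀ a b c : R, br (a + b) c = br a c + br b c)
    (hanti : ∀ a b : R, br a b = -br b a)
    (hleib : ∀ a b c : R, br a (b * c) = br a b * c + b * br a c)
    (k : ℕ) (C : Fin k → R) (N : Fin k → Fin k → R)
    (hNinv : ∀ m j, (∑ n, N m n * br (C n) (C j)) = if m = j then 1 else 0) :
    ∀ (F : R) (j : Fin k),
      br (F - ∑ m, ∑ n, br F (C m) * N m n * C n) (C j) ∈ Ideal.span (Set.range C) := by
  intro F j
  let D := bracketDerivation br hadd₁ hanti hleib (C j)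
  let a n := ∑ m, br F (C m) * N m n
  have hF' : ∑ m, ∑ n, br F (C m) * N m n * C n = ∑ n, a n * C n := by
    simp only [a, sum_mul]
    exact sum_comm
  have hcancel : ∑ n, a n * D (C n) = D F :=
    sum_sum_mul_mul_eq_of_mul_eq_one N (fun n j => br (C n) (C j)) hNinv (fun m => br F (C m)) j
  have hmem := neg_mem (D.map_sum_mul_sub_sum_mul_mem_span univ a C)
  rwa [neg_sub, hcancel, ← map_sub, ← hF'] at hmem

/-- in a Poisson algebra with constraints `C` and exact inverse matrix `N` of the
constraint-bracket matrix, assuming `{N m n, C j}` lies in the constraint ideal `I`,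
the modified element `F' := F - ∑ {F,C m} N m n * C n` has its bracket with every
constraint lying in `I`. -/
theorem modified_element_bracket_constraint_mem_ideal
    (R : Type*) [CommRing R] (br : R → R → R)
    (hadd₁ : ∀ a b c : R, br (a + b) c = br a c + br b c)
    (hadd₂ : ∀ a b c : R, br a (b + c) = br a b + br a c)
    (hanti : ∀ a b : R, br a b = -br b a)
    (hjac : ∀ a b c : R, br a (br b c) + br b (br c a) + br c (br a b) = 0)
    (hleib : ∀ a b c : R, br a (b * c) = br a b * c + b * br a c)
    (k : ℕ) (C : Fin k → R) (N : Fin k → Fin k → R)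
    (hNinv : ∀ m j, (∑ n, N m n * br (C n) (C j)) = if m = j then 1 else 0)
    (hNC : ∀ m n j, br (N m n) (C j) ∈ Ideal.span (Set.range C)) :
    ∀ (F : R) (j : Fin k),
      br (F - ∑ m, ∑ n, br F (C m) * N m n * C n) (C j) ∈ Ideal.span (Set.range C) :=
  modified_element_bracket_constraint_mem_ideal_general R br hadd₁ hanti hleib k C N hNinv
end

section
/- If in a Poisson algebra the constraint-bracket matrix M_{mn} = {C_m, C_n} is invertible modulo the constraint ideal I, and F' := F − Σ{F,C_m}N_{mn}C_n, G' := G − Σ{G,C_m}N_{mn}C_n, then {F',G'} − {F,G}^D ∈ I, where {F,G}^D is the Dirac bracket. -/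
section Bracket

variable {R : Type*} [CommRing R] {br : R → R → R}

theorem bracket_sub_left (hadd : ∀ a b c, br (a + b) c = br a c + br b c) (a b c : R) :
    br (a - b) c = br a c - br b c :=
  map_sub (AddMonoidHom.mk' (br · c) (hadd · · c)) a b

theorem bracket_sub_right (hadd : ∀ a b c, br a (b + c) = br a b + br a c) (a b c : R) :
    br a (b - c) = br a b - br a c :=
  map_sub (AddMonoidHom.mk' (br a) (hadd a)) b c

theorem bracket_sum_left {ι : Type*} (hadd : ∀ a b c, br (a + b) c = br a c + br b c)
    (s : Finset ι) (f : ι → R) (c : R) : br (∑ i ∈ s, f i) c = ∑ i ∈ s, br (f i) c :=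
  map_sum (AddMonoidHom.mk' (br · c) (hadd · · c)) f s

theorem bracket_sum_right {ι : Type*} (hadd : ∀ a b c, br a (b + c) = br a b + br a c)
    (a : R) (s : Finset ι) (f : ι → R) : br a (∑ i ∈ s, f i) = ∑ i ∈ s, br a (f i) :=
  map_sum (AddMonoidHom.mk' (br a) (hadd a)) f s

variable {I : Ideal R}

theorem mk_bracket_mul_right_of_mem (hleib : ∀ a b c, br a (b * c) = br a b * c + b * br a c)
    {c : R} (hc : c ∈ I) (x a : R) :
    Ideal.Quotient.mk I (br x (a * c)) = Ideal.Quotient.mk I a * Ideal.Quotient.mk I (br x c) := by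
  rw [hleib, map_add, map_mul, Ideal.Quotient.eq_zero_iff_mem.mpr hc, map_mul, mul_zero, zero_add]

theorem mk_bracket_mul_left_of_mem (hanti : ∀ a b, br a b = -br b a)
    (hleib : ∀ a b c, br a (b * c) = br a b * c + b * br a c)
    {c : R} (hc : c ∈ I) (a y : R) :
    Ideal.Quotient.mk I (br (a * c) y) = Ideal.Quotient.mk I a * Ideal.Quotient.mk I (br c y) := by
  rw [hanti, map_neg, mk_bracket_mul_right_of_mem hleib hc, hanti c, map_neg, mul_neg]

end Bracket

/-- In matrix form: `fᵀ (ν μ) νᵀ g = fᵀ νᵀ g` once `ν μ = 1`. -/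
theorem sum_mul_mul_eq_of_sum_mul_eq_ite {S ι : Type*} [CommRing S] [Fintype ι] [DecidableEq ι]
    (f g : ι → S) (ν μ : ι → ι → S) (hνμ : ∀ m j, ∑ n, ν m n * μ n j = if m = j then 1 else 0) :
    ∑ m, ∑ n, ∑ m', ∑ n', f m * ν m n * (g m' * ν m' n' * μ n n') =
      ∑ m, ∑ n, g m * ν m n * f n := by
  rw [Finset.sum_comm (f := fun m n => g m * ν m n * f n)]
  refine Finset.sum_congr rfl fun m _ => ?_
  rw [Finset.sum_comm]
  refine Finset.sum_congr rfl fun m' _ => ?_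
  calc ∑ n, ∑ n', f m * ν m n * (g m' * ν m' n' * μ n n')
      = ∑ n', f m * g m' * ν m' n' * ∑ n, ν m n * μ n n' := by
        rw [Finset.sum_comm]
        refine Finset.sum_congr rfl fun n' _ => ?_
        rw [Finset.mul_sum]
        exact Finset.sum_congr rfl fun n _ => by ring
    _ = g m' * ν m' m * f m := by
        simp only [hνμ, mul_ite, mul_one, mul_zero, Finset.sum_ite_eq, Finset.mem_univ, if_true]
        ring

theorem poisson_of_modified_eq_diracBracket_mod_ideal_general
    (R : Type*) [CommRing R] (br : R → R → R)
    (hadd₁ : ∀ a b c : R, br (a + b) c = br a c + br b c)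
    (hadd₂ : ∀ a b c : R, br a (b + c) = br a b + br a c)
    (hanti : ∀ a b : R, br a b = -br b a)
    (hleib : ∀ a b c : R, br a (b * c) = br a b * c + b * br a c)
    (k : ℕ) (C : Fin k → R) (N : Fin k → Fin k → R)
    (hN : ∀ m j, (∑ n, N m n * br (C n) (C j)) - (if m = j then 1 else 0)
            ∈ Ideal.span (Set.range C)) :
    ∀ F G : R,
      br (F - ∑ m, ∑ n, br F (C m) * N m n * C n)
         (G - ∑ m, ∑ n, br G (C m) * N m n * C n)
        - diracBracket br C N F G ∈ Ideal.span (Set.range C) := by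
  intro F G
  set π := Ideal.Quotient.mk (Ideal.span (Set.range C))
  have hC : ∀ n, C n ∈ Ideal.span (Set.range C) := fun n => Ideal.subset_span ⟨n, rfl⟩
  have hNM : ∀ m j, ∑ n, π (N m n) * π (br (C n) (C j)) = if m = j then 1 else 0 := by
    intro m j
    simpa [π, sub_eq_zero, apply_ite π] using Ideal.Quotient.eq_zero_iff_mem.mpr (hN m j)
  rw [← Ideal.Quotient.eq]
  simp only [diracBracket, bracket_sub_left hadd₁, bracket_sub_right hadd₂,
    bracket_sum_left hadd₁, bracket_sum_right hadd₂, map_sub, map_sum, map_mul,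
    mk_bracket_mul_left_of_mem hanti hleib (hC _), mk_bracket_mul_right_of_mem hleib (hC _)]
  rw [sum_mul_mul_eq_of_sum_mul_eq_ite _ _ _ _ hNM]
  ring

/-- with `F' := F - ∑ {F,C m} N m n * C n` and similarly `G'`, the Poisson
bracket `{F',G'}` agrees with the Dirac bracket `{F,G}^D` modulo the constraint ideal,
given that `N` is antisymmetric and inverts the constraint-bracket matrix modulo the ideal. -/
theorem poisson_of_modified_eq_diracBracket_mod_ideal
    (R : Type*) [CommRing R] (br : R → R → R)
    (hadd₁ : ∀ a b c : R, br (a + b) c = br a c + br b c)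
    (hadd₂ : ∀ a b c : R, br a (b + c) = br a b + br a c)
    (hanti : ∀ a b : R, br a b = -br b a)
    (hjac : ∀ a b c : R, br a (br b c) + br b (br c a) + br c (br a b) = 0)
    (hleib : ∀ a b c : R, br a (b * c) = br a b * c + b * br a c)
    (k : ℕ) (C : Fin k → R) (N : Fin k → Fin k → R)
    (hNanti : ∀ m n, N m n = -N n m)
    (hN : ∀ m j, (∑ n, N m n * br (C n) (C j)) - (if m = j then 1 else 0)
            ∈ Ideal.span (Set.range C)) :
    ∀ F G : R,
      br (F - ∑ m, ∑ n, br F (C m) * N m n * C n)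
         (G - ∑ m, ∑ n, br G (C m) * N m n * C n)
        - diracBracket br C N F G ∈ Ideal.span (Set.range C) :=
  poisson_of_modified_eq_diracBracket_mod_ideal_general R br hadd₁ hadd₂ hanti hleib k C N hN
end
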